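/- Let φ = (√5 - 1)/2. Then Li_2(φ^2) = π^2/15 - (ln φ)^2, where Li_2(x) = ∑_{n=1}^∞ x^n/n^2. -/

import Mathlib

open Real Finset

noncomputable def H (n : ℕ) : ℝ := ∑ k ∈ Finset.range n, 1 / ((k : ℝ) + 1)

noncomputable def H2 (n : ℕ) : ℝ := ∑ k ∈ Finset.range n, 1 / ((k : ℝ) + 1) ^ 2

noncomputable def zeta11 (n : ℕ) : ℝ :=
  ∑ k ∈ Finset.range n, ∑ j ∈ Finset.range k, 1 / (((k : ℝ) + 1) * ((j : ℝ) + 1))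

noncomputable def Li (m : ℕ) (x : ℝ) : ℝ := ∑' n : ℕ, x ^ (n + 1) / ((n : ℝ) + 1) ^ m

noncomputable def Li21 (x : ℝ) : ℝ := ∑' n : ℕ, x ^ (n + 1) * H n / ((n : ℝ) + 1) ^ 2

noncomputable def Li31 (x : ℝ) : ℝ := ∑' n : ℕ, x ^ (n + 1) * H n / ((n : ℝ) + 1) ^ 3

noncomputable def zeta3 : ℝ := ∑' n : ℕ, 1 / ((n : ℝ) + 1) ^ 3

noncomputable def zeta31 : ℝ := ∑' n : ℕ, H n / ((n : ℝ) + 1) ^ 3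

/-!
With `φ² = 1 - φ`, Euler's reflection formula `Li₂ x + Li₂ (1 - x) + log x log (1 - x) = ζ(2)`
and Landen's identity `Li₂ x + Li₂ (x / (x - 1)) + log² (1 - x) / 2 = 0`, both taken at
`x = φ²` (where `x / (x - 1) = -φ`), and the duplication formula
`Li₂ (φ²) = 2 Li₂ φ + 2 Li₂ (-φ)` form a linear system in `Li₂ (φ²)`, `Li₂ φ`, `Li₂ (-φ)`
whose solution is the claim. Both functional equations hold because the left-hand side has
derivative zero (as `Li₂' x = -log (1 - x) / x`) and is continuous up to `x = 0`, where its
value is known; for the reflection formula it is `Li₂ 1 = ζ(2) = π² / 6`.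
-/

open Filter Set Topology

lemma summable_one_div_nat_add_one_pow {m : ℕ} (hm : 1 < m) :
    Summable fun n : ℕ => 1 / ((n : ℝ) + 1) ^ m := by
  simpa using (summable_nat_add_iff 1).2 (Real.summable_one_div_nat_pow.2 hm)

lemma norm_pow_succ_div_le {m n : ℕ} {x : ℝ} (hx : |x| ≤ 1) :
    ‖x ^ (n + 1) / ((n : ℝ) + 1) ^ m‖ ≤ 1 / ((n : ℝ) + 1) ^ m := by
  rw [norm_div, norm_pow, Real.norm_eq_abs, Real.norm_of_nonneg (by positivity)]
  gcongr
  exact pow_le_one₀ (abs_nonneg x) hx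

lemma summable_Li {m : ℕ} (hm : 1 < m) {x : ℝ} (hx : |x| ≤ 1) :
    Summable fun n : ℕ => x ^ (n + 1) / ((n : ℝ) + 1) ^ m :=
  .of_norm_bounded (summable_one_div_nat_add_one_pow hm) fun _ => norm_pow_succ_div_le hx

lemma continuousOn_Li {m : ℕ} (hm : 1 < m) : ContinuousOn (Li m) (Icc (-1) 1) :=
  continuousOn_tsum (fun _ => by fun_prop) (summable_one_div_nat_add_one_pow hm)
    fun _ _ hx => norm_pow_succ_div_le (abs_le.2 hx)

@[simp]
lemma Li_apply_zero (m : ℕ) : Li m 0 = 0 := by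
  simp [Li]

lemma Li_two_one : Li 2 1 = π ^ 2 / 6 := by
  have h := (hasSum_nat_add_iff (f := fun n : ℕ => 1 / (n : ℝ) ^ 2) 1).2
    (by simpa using hasSum_zeta_two)
  simpa [Li] using h.tsum_eq

lemma Li_one {x : ℝ} (hx : |x| < 1) : Li 1 x = -log (1 - x) := by
  simpa [Li] using (hasSum_pow_div_log_of_abs_lt_one hx).tsum_eq

lemma hasDerivAt_Li_succ (m : ℕ) {x : ℝ} (hx : |x| < 1) (hx0 : x ≠ 0) :
    HasDerivAt (Li (m + 1)) (Li m x / x) x := by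
  obtain ⟨r, hxr, hr1⟩ := exists_between hx
  have hr0 : 0 < r := (abs_nonneg x).trans_lt hxr
  have hLi : ∑' n : ℕ, x ^ n / ((n : ℝ) + 1) ^ m = Li m x / x := by
    rw [eq_div_iff hx0, mul_comm, Li, ← tsum_mul_left]
    congr 1 with n
    ring
  rw [← hLi]
  refine hasDerivAt_tsum_of_isPreconnected (u := fun n => r ^ n) (t := Ioo (-r) r)
    (g := fun (n : ℕ) y => y ^ (n + 1) / ((n : ℝ) + 1) ^ (m + 1))
    (g' := fun (n : ℕ) y => y ^ n / ((n : ℝ) + 1) ^ m)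
    (summable_geometric_of_lt_one hr0.le hr1) isOpen_Ioo isPreconnected_Ioo
    (fun n y _ => ?_) (fun n y hy => ?_) (y₀ := 0) ⟨by linarith, by linarith⟩ (by simp)
    (abs_lt.1 hxr)
  · refine ((hasDerivAt_pow (n + 1) y).div_const _).congr_deriv ?_
    field_simp
    push_cast
    ring
  · have hy : |y| ≤ r := (abs_lt.2 hy).le
    rw [norm_div, norm_pow, Real.norm_eq_abs, Real.norm_of_nonneg (by positivity)]
    calc |y| ^ n / ((n : ℝ) + 1) ^ m ≤ |y| ^ n :=
          div_le_self (by positivity) (one_le_pow₀ (by linarith [n.cast_nonneg (α := ℝ)]))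
      _ ≤ r ^ n := by gcongr

lemma hasDerivAt_Li_two {x : ℝ} (hx : |x| < 1) (hx0 : x ≠ 0) :
    HasDerivAt (Li 2) (-log (1 - x) / x) x := by
  simpa [Li_one hx] using hasDerivAt_Li_succ 1 hx hx0

lemma eq_of_hasDerivAt_eq_zero {f : ℝ → ℝ} {a b x : ℝ} (hf : ContinuousOn f (Icc a b))
    (hf' : ∀ y ∈ Ioo a b, HasDerivAt f 0 y) (hx : x ∈ Icc a b) : f x = f a := by
  rcases hx.1.eq_or_lt with rfl | hax
  · rfl
  obtain ⟨c, -, hslope⟩ := exists_hasDerivAt_eq_slope f (fun _ => 0) hax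
    (hf.mono (Icc_subset_Icc_right hx.2)) fun y hy => hf' y ⟨hy.1, hy.2.trans_le hx.2⟩
  rw [eq_comm, div_eq_zero_iff, sub_eq_zero] at hslope
  exact hslope.resolve_right (sub_ne_zero.2 hax.ne')

lemma tendsto_log_mul_log_one_sub_nhds_zero :
    Tendsto (fun x => log x * log (1 - x)) (𝓝 0) (𝓝 0) := by
  have hmul_log : Tendsto (fun x => 2 * |x * log x|) (𝓝 0) (𝓝 0) := by
    simpa using ((continuous_mul_log.abs).const_mul 2).tendsto 0
  refine squeeze_zero_norm' ?_ hmul_log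
  filter_upwards [Metric.ball_mem_nhds (0 : ℝ) (by norm_num : (0 : ℝ) < 1 / 2)] with x hx
  rw [Metric.mem_ball, dist_zero_right, Real.norm_eq_abs] at hx
  have hlog : |log (1 - x)| ≤ 2 * |x| := by
    have h := abs_log_sub_add_sum_range_le (hx.trans (by norm_num)) 0
    simp only [range_zero, sum_empty, zero_add, pow_one] at h
    refine h.trans ?_
    rw [div_le_iff₀ (by linarith)]
    nlinarith [abs_nonneg x]
  rw [norm_mul, Real.norm_eq_abs, Real.norm_eq_abs, abs_mul]
  calc |log x| * |log (1 - x)| ≤ |log x| * (2 * |x|) := by gcongr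
    _ = 2 * (|x| * |log x|) := by ring

lemma continuous_log_mul_log_one_sub : Continuous fun x => log x * log (1 - x) := by
  have h0 : ContinuousAt (fun x => log x * log (1 - x)) 0 := by
    simpa [ContinuousAt] using tendsto_log_mul_log_one_sub_nhds_zero
  have hsymm : (fun x => log x * log (1 - x)) = (fun x => log x * log (1 - x)) ∘ (1 - ·) := by
    funext x
    simp [mul_comm]
  refine continuous_iff_continuousAt.2 fun x => ?_
  by_cases hx0 : x = 0
  · exact hx0 ▸ h0
  by_cases hx1 : x = 1
  · subst hx1
    rw [hsymm]
    exact ContinuousAt.comp (by simpa using h0) (by fun_prop)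
  · exact (continuousAt_log hx0).mul
      ((continuousAt_log (sub_ne_zero.2 (Ne.symm hx1))).comp (by fun_prop))

lemma hasDerivAt_Li_two_reflection {x : ℝ} (hx : x ∈ Ioo (0 : ℝ) 1) :
    HasDerivAt (fun y => Li 2 y + Li 2 (1 - y) + log y * log (1 - y)) 0 x := by
  obtain ⟨hx0, hx1⟩ := hx
  have h1x : 1 - x ≠ 0 := by linarith
  have hsub : HasDerivAt (fun y : ℝ => 1 - y) (-1) x := by
    simpa using (hasDerivAt_id x).const_sub 1
  have hLi := hasDerivAt_Li_two (abs_lt.2 ⟨by linarith, hx1⟩) hx0.ne'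
  have hLi_sub := (hasDerivAt_Li_two (abs_lt.2 ⟨by linarith, by linarith⟩) h1x).comp x hsub
  have hlog := (hasDerivAt_log hx0.ne').mul ((hasDerivAt_log h1x).comp x hsub)
  refine ((hLi.add hLi_sub).add hlog).congr_deriv ?_
  simp only [Function.comp_apply, sub_sub_cancel]
  field_simp
  ring

theorem Li_two_reflection {x : ℝ} (hx : x ∈ Icc (0 : ℝ) 1) :
    Li 2 x + Li 2 (1 - x) + log x * log (1 - x) = π ^ 2 / 6 := by
  have hLi := continuousOn_Li one_lt_two
  have hcont : ContinuousOn (fun y => Li 2 y + Li 2 (1 - y) + log y * log (1 - y)) (Icc 0 1) :=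
    ((hLi.mono fun y hy => ⟨by linarith [hy.1], hy.2⟩).add
      (hLi.comp (by fun_prop) fun y hy => ⟨by linarith [hy.2], by linarith [hy.1]⟩)).add
      continuous_log_mul_log_one_sub.continuousOn
  simpa [Li_two_one] using
    eq_of_hasDerivAt_eq_zero hcont (fun y hy => hasDerivAt_Li_two_reflection hy) hx

lemma hasDerivAt_Li_two_landen {x : ℝ} (hx : x ∈ Ioo (0 : ℝ) (1 / 2)) :
    HasDerivAt (fun y => Li 2 y + Li 2 (y / (y - 1)) + log (1 - y) ^ 2 / 2) 0 x := by
  obtain ⟨hx0, hx1⟩ := hx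
  have h1x : 1 - x ≠ 0 := by linarith
  have hx1' : x - 1 ≠ 0 := by linarith
  have hu : x / (x - 1) = -x / (1 - x) := by
    rw [← neg_sub, div_neg, neg_div]
  have hu_abs : |x / (x - 1)| < 1 := by
    rw [hu, abs_div, abs_neg, abs_of_pos hx0, abs_of_pos (by linarith), div_lt_one (by linarith)]
    linarith
  have hu_log : log (1 - x / (x - 1)) = -log (1 - x) := by
    rw [← log_inv]
    congr 1
    field_simp
    ring
  have hdiv : HasDerivAt (fun y : ℝ => y / (y - 1)) ((1 * (x - 1) - x * 1) / (x - 1) ^ 2) x :=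
    (hasDerivAt_id x).div ((hasDerivAt_id x).sub_const 1) hx1'
  have hsub : HasDerivAt (fun y : ℝ => 1 - y) (-1) x := by
    simpa using (hasDerivAt_id x).const_sub 1
  have hLi := hasDerivAt_Li_two (abs_lt.2 ⟨by linarith, by linarith⟩) hx0.ne'
  have hLi_div := (hasDerivAt_Li_two hu_abs (div_ne_zero hx0.ne' hx1')).comp x hdiv
  have hlog := (((hasDerivAt_log h1x).comp x hsub).pow 2).div_const 2
  refine ((hLi.add hLi_div).add hlog).congr_deriv ?_
  simp only [Function.comp_apply, hu_log]
  field_simp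
  ring

theorem Li_two_landen {x : ℝ} (hx : x ∈ Icc (0 : ℝ) (1 / 2)) :
    Li 2 x + Li 2 (x / (x - 1)) + log (1 - x) ^ 2 / 2 = 0 := by
  have hLi := continuousOn_Li one_lt_two
  have hdiv : ContinuousOn (fun y : ℝ => y / (y - 1)) (Icc 0 (1 / 2)) :=
    continuousOn_id.div (by fun_prop) fun y hy => by linarith [hy.2]
  have hdiv_mem : MapsTo (fun y : ℝ => y / (y - 1)) (Icc 0 (1 / 2)) (Icc (-1) 1) := by
    intro y ⟨hy0, hy1⟩
    constructor
    · rw [le_div_iff_of_neg (by linarith)]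
      linarith
    · rw [div_le_iff_of_neg (by linarith)]
      linarith
  have hlog : ContinuousOn (fun y => log (1 - y) ^ 2 / 2) (Icc (0 : ℝ) (1 / 2)) :=
    (((by fun_prop : ContinuousOn (fun y : ℝ => 1 - y) _).log fun y hy => by
      linarith [hy.2]).pow 2).div_const 2
  have hcont : ContinuousOn (fun y => Li 2 y + Li 2 (y / (y - 1)) + log (1 - y) ^ 2 / 2)
      (Icc 0 (1 / 2)) :=
    ((hLi.mono fun y hy => ⟨by linarith [hy.1], by linarith [hy.2]⟩).add
      (hLi.comp hdiv hdiv_mem)).add hlog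
  simpa using eq_of_hasDerivAt_eq_zero hcont (fun y hy => hasDerivAt_Li_two_landen hy) hx

theorem two_mul_Li_sq {m : ℕ} (hm : 1 < m) {x : ℝ} (hx : |x| ≤ 1) :
    2 * Li m (x ^ 2) = 2 ^ m * (Li m x + Li m (-x)) := by
  set t : ℕ → ℝ := fun n => x ^ (n + 1) / ((n : ℝ) + 1) ^ m + (-x) ^ (n + 1) / ((n : ℝ) + 1) ^ m
  have ht : HasSum t (Li m x + Li m (-x)) :=
    (summable_Li hm hx).hasSum.add (summable_Li hm (by rwa [abs_neg])).hasSum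
  have hodd_inj : Function.Injective fun k : ℕ => 2 * k + 1 := fun a b h => by
    simp only at h
    omega
  have ht_even : ∀ n ∉ range fun k : ℕ => 2 * k + 1, t n = 0 := by
    intro n hn
    have hn_odd : Odd (n + 1) :=
      (Nat.even_or_odd n |>.resolve_right fun ⟨k, hk⟩ => hn ⟨k, hk.symm⟩).add_one
    simp [t, hn_odd.neg_pow, neg_div]
  have ht_odd : HasSum (fun k : ℕ => 2 / 2 ^ m * ((x ^ 2) ^ (k + 1) / ((k : ℝ) + 1) ^ m))
      (Li m x + Li m (-x)) := by
    refine ((hodd_inj.hasSum_iff ht_even).2 ht).congr_fun fun k => ?_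
    have hx_pow : (-x) ^ (2 * k + 1 + 1) = (x ^ 2) ^ (k + 1) := by
      rw [show 2 * k + 1 + 1 = 2 * (k + 1) by ring, pow_mul, neg_sq]
    have hx_pow' : x ^ (2 * k + 1 + 1) = (x ^ 2) ^ (k + 1) := by
      rw [← pow_mul]
      ring_nf
    have hcast : ((2 * k + 1 : ℕ) : ℝ) + 1 = 2 * ((k : ℝ) + 1) := by
      push_cast
      ring
    simp only [Function.comp_apply, t, hx_pow, hx_pow', hcast, mul_pow]
    field_simp
    ring
  have hLi : HasSum (fun n : ℕ => (x ^ 2) ^ (n + 1) / ((n : ℝ) + 1) ^ m) (Li m (x ^ 2)) :=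
    (summable_Li hm (by rw [abs_pow]; exact pow_le_one₀ (abs_nonneg x) hx)).hasSum
  have h := hLi.mul_left (2 / 2 ^ m) |>.unique ht_odd
  field_simp at h
  exact h

theorem stmt8 :
    Li 2 ((((Real.sqrt 5 - 1) / 2)) ^ 2) = π ^ 2 / 15 - Real.log (((Real.sqrt 5 - 1) / 2)) ^ 2 := by
  set φ : ℝ := (Real.sqrt 5 - 1) / 2 with hφ
  have h5 : Real.sqrt 5 ^ 2 = 5 := sq_sqrt (by norm_num)
  have hsqrt5 : 2 < Real.sqrt 5 ∧ Real.sqrt 5 < 3 := by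
    constructor <;> nlinarith [Real.sqrt_nonneg 5]
  have hφ_sq : φ ^ 2 = 1 - φ := by
    rw [hφ]
    linear_combination h5 / 4
  have hφ_mem : φ ∈ Icc (1 / 2 : ℝ) 1 := ⟨by linarith, by linarith⟩
  have hrefl := Li_two_reflection (x := φ ^ 2) ⟨by positivity, by linarith [hφ_mem.1]⟩
  have hlanden := Li_two_landen (x := φ ^ 2) ⟨by positivity, by linarith [hφ_mem.1]⟩
  have hdup := two_mul_Li_sq one_lt_two (abs_le.2 ⟨by linarith [hφ_mem.1], hφ_mem.2⟩)
  have h1 : 1 - φ ^ 2 = φ := by linarith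
  have hdiv : φ ^ 2 / (φ ^ 2 - 1) = -φ := by
    rw [div_eq_iff (by linarith [hφ_mem.1])]
    linear_combination φ * hφ_sq
  rw [h1, log_pow] at hrefl
  rw [hdiv, h1] at hlanden
  push_cast at hrefl
  linear_combination (2 / 5) * hrefl + (2 / 5) * hlanden + (1 / 10) * hdup
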